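/- Fix x,y,z ∈ S_C, let μ = μ(x,y,z) and r = d_C(x,μ). There exist balls B₁,…,B_m in S_C, each of radius at most 2L(m+1), such that for every wall h ∈ H^L_{r−L−1}(x,y) ∖ H^L(x,z) there is some i with g_{[x,y]}(h⁻) ⊆ B_i. -/
import Mathlib


/-!
Common definitions: coarse geometry (hyperbolicity, rough geodesics, stable cylinders,
quasi-isometries, quasitrees, coarse medians), word metrics, spaces with walls,
dualisable systems and their dual spaces, walls of quasitrees coming from balls,
and the induced wall structures on images of spaces in products of quasitrees.
-/

open Set Metric

namespace GSC

universe u v w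

variable {X Y : Type*}

/-- The Gromov product `⟨y,z⟩_w` with respect to the distance function `d`. -/
noncomputable def gp (d : X → X → ℝ) (w y z : X) : ℝ := (d w y + d w z - d y z) / 2

/-- `d` satisfies the four-point `δ`-hyperbolicity condition. -/
def IsHyp (d : X → X → ℝ) (δ : ℝ) : Prop :=
  ∀ w x y z : X, min (gp d w x y) (gp d w y z) - δ ≤ gp d w x z

/-- `γ`, restricted to `[a,b]`, is a `k`-rough geodesic from `x` to `y`:
a `(1,k)`-quasi-isometric embedding of an interval joining `x` to `y`. -/
def IsRG (d : X → X → ℝ) (k : ℝ) (x y : X) (γ : ℝ → X) (a b : ℝ) : Prop :=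
  a ≤ b ∧ γ a = x ∧ γ b = y ∧
    ∀ s ∈ Icc a b, ∀ t ∈ Icc a b, abs (d (γ s) (γ t) - |s - t|) ≤ k

/-- `X` is `k`-roughly geodesic: any two points are joined by a `k`-rough geodesic. -/
def RGSpace (d : X → X → ℝ) (k : ℝ) : Prop :=
  ∀ x y : X, ∃ γ a b, IsRG d k x y γ a b

/-- The (closed) ball of radius `r` about `x` for the distance function `d`. -/
def rball (d : X → X → ℝ) (x : X) (r : ℝ) : Set X := {p | d x p ≤ r}

/-- `C` is a choice of `θ`-cylinders (with respect to `δ`-rough geodesics): for all `x,y`,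
every `δ`-rough geodesic from `x` to `y` is contained in `C x y`, and `C x y` is contained
in the `θ`-neighbourhood of every `δ`-rough geodesic from `x` to `y`. -/
def IsCylinders (d : X → X → ℝ) (δ θ : ℝ) (C : X → X → Set X) : Prop :=
  ∀ x y γ a b, IsRG d δ x y γ a b →
    γ '' Icc a b ⊆ C x y ∧ ∀ p ∈ C x y, ∃ q ∈ γ '' Icc a b, d p q ≤ θ

/-- The choice of cylinders `C` is globally `(k,R)`-stable: it is reversible, and for any
`x,y,z` the cylinders `C x y` and `C x z` agree inside the ball of radius `⟨y,z⟩ₓ` about `x`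
after removing `k` balls of radius `R`. -/
def IsStable (d : X → X → ℝ) (k : ℕ) (R : ℝ) (C : X → X → Set X) : Prop :=
  (∀ x y, C x y = C y x) ∧
    ∀ x y z : X, ∃ B : Fin k → X,
      (C x y ∩ rball d x (gp d x y z)) \ (⋃ i, rball d (B i) R) =
      (C x z ∩ rball d x (gp d x y z)) \ (⋃ i, rball d (B i) R)

/-- `μ` is a coarse median (coarse centre of triangles) for the hyperbolic distance `d`:
the distance of `μ x y z` to each vertex agrees with the corresponding Gromov product up
to the additive error `c`. -/
def IsCoarseMedian (d : X → X → ℝ) (μ : X → X → X → X) (c : ℝ) : Prop :=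
  ∀ x y z : X,
    |d x (μ x y z) - gp d x y z| ≤ c ∧
    |d y (μ x y z) - gp d y x z| ≤ c ∧
    |d z (μ x y z) - gp d z x y| ≤ c

/-- `f` is a `lam`-quasi-isometric embedding from `(X,dX)` to `(Y,dY)`. -/
def IsQIE (dX : X → X → ℝ) (dY : Y → Y → ℝ) (f : X → Y) (lam : ℝ) : Prop :=
  ∀ x x' : X, dX x x' / lam - lam ≤ dY (f x) (f x') ∧ dY (f x) (f x') ≤ lam * dX x x' + lam

/-- `f` is a `lam`-quasi-isometry from `(X,dX)` to `(Y,dY)`. -/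
def IsQI (dX : X → X → ℝ) (dY : Y → Y → ℝ) (f : X → Y) (lam : ℝ) : Prop :=
  IsQIE dX dY f lam ∧ ∀ y : Y, ∃ x : X, dY (f x) y ≤ lam

/-- `(T,d)` is a quasitree (with constant `lam`): it is roughly geodesic and
quasi-isometric to a simplicial tree. -/
def IsQuasitree {T : Type u} (d : T → T → ℝ) (lam : ℝ) : Prop :=
  RGSpace d lam ∧
    ∃ (V : Type u) (Γ : SimpleGraph V), Γ.IsTree ∧
      ∃ f : T → V, IsQIE d (fun a b => (Γ.dist a b : ℝ)) f lam ∧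
        ∀ v : V, ∃ t : T, (Γ.dist v (f t) : ℝ) ≤ lam

/-- The `ℓ¹` distance on a finite product. -/
noncomputable def l1distF {m : ℕ} {T : Fin m → Type*} (dT : ∀ i, T i → T i → ℝ)
    (p q : ∀ i, T i) : ℝ := ∑ i, dT i (p i) (q i)

/-- The word metric on a group `G` with respect to a generating set `A`
(the distance function of the Cayley graph of `(G,A)`). -/
noncomputable def wordDist {G : Type*} [Group G] (A : Set G) (g h : G) : ℝ :=
  (sInf {n : ℕ | ∃ l : List G, l.length = n ∧ (∀ a ∈ l, a ∈ A ∨ a⁻¹ ∈ A) ∧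
    l.prod = g⁻¹ * h} : ℕ)

/-- `(X, dX, μX)`, with the `G`-action `ρ`, admits a `G`-equivariant quasimedian
quasi-isometric embedding into a product of `m` quasitrees (with the `ℓ¹` metric and
coordinatewise coarse median); i.e. the strong quasitree rank of `(X,G)` is at most `m`. -/
def HasStrongQT {G : Type*} [Group G] {X : Type u} (ρ : G →* Equiv.Perm X)
    (dX : X → X → ℝ) (μX : X → X → X → X) (m : ℕ) : Prop :=
  ∃ (T : Fin m → Type u) (dT : ∀ i, T i → T i → ℝ) (μT : ∀ i, T i → T i → T i → T i)
    (f : X → ∀ i, T i) (α : G →* Equiv.Perm (∀ i, T i)) (lam c : ℝ),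
      (∀ i, IsQuasitree (dT i) lam) ∧
      (∀ i, IsCoarseMedian (dT i) (μT i) c) ∧
      IsQIE dX (l1distF dT) f lam ∧
      (∀ x y z : X, l1distF dT (fun i => μT i (f x i) (f y i) (f z i)) (f (μX x y z)) ≤ c) ∧
      (∀ (g : G) p q, l1distF dT (α g p) (α g q) = l1distF dT p q) ∧
      (∀ (g : G) x, f (ρ g x) = α g (f x))

/-! ### Sets with walls, ultrafilters and dualisable systems

A wall on a set `X` is a bipartition into two halfspaces.  We model a collection of
walls as a collection `H` of halfspaces (subsets of `X`) that is closed under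
complementation; the wall corresponding to a halfspace `h` is the bipartition `{h, hᶜ}`. -/

/-- `H` is a collection of halfspaces closed under complementation (a set of walls). -/
def WallClosed (H : Set (Set X)) : Prop := ∀ h ∈ H, hᶜ ∈ H

/-- `x` is an ultrafilter on the walls `H`: a consistent choice of one halfspace of every
wall of `H`. -/
def IsUF (H : Set (Set X)) (x : Set (Set X)) : Prop :=
  x ⊆ H ∧ (∀ h ∈ H, (h ∈ x ↔ hᶜ ∉ x)) ∧ ∀ h ∈ x, ∀ k ∈ H, h ⊆ k → k ∈ x

/-- The principal ultrafilter of a point `s`: the halfspaces containing `s`. -/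
def pUF (H : Set (Set X)) (s : X) : Set (Set X) := {h ∈ H | s ∈ h}

/-- The set `c` of walls separates the ultrafilters `x` and `y`: they orient every
wall of `c` oppositely. -/
def Seps (x y c : Set (Set X)) : Prop := ∀ h ∈ c, (h ∈ x ↔ h ∉ y)

/-- `d_D(x,y) = sup { |c| : c ∈ D separates x from y }`. -/
noncomputable def dD (D : Set (Set (Set X))) (x y : Set (Set X)) : ℕ∞ :=
  ⨆ (c : Set (Set X)) (_ : c ∈ D ∧ Seps x y c), c.encard

/-- The real-valued version of `dD` (equal to it whenever `dD` is finite). -/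
noncomputable def dDr (D : Set (Set (Set X))) (x y : Set (Set X)) : ℝ :=
  ((dD D x y).toNat : ℝ)

/-- `D` is a dualisable system on the set with walls `(X,H)`. -/
def IsDualisable (H : Set (Set X)) (D : Set (Set (Set X))) : Prop :=
  (∀ c ∈ D, c ⊆ H) ∧ (∀ h ∈ H, ({h} : Set (Set X)) ∈ D) ∧
    (∀ c ∈ D, ∀ c' ⊆ c, c' ∈ D) ∧
    ∀ s t : X, dD D (pUF H s) (pUF H t) < ⊤

/-- The dual space `X_D`: all ultrafilters at finite `d_D`-distance from the principal
ultrafilters of points of `X`. -/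
def dualSpace (H : Set (Set X)) (D : Set (Set (Set X))) : Set (Set (Set X)) :=
  {x | IsUF H x ∧ ∀ s : X, dD D x (pUF H s) < ⊤}

/-- `c` is a chain of walls: the walls of `c` can be oriented so that the chosen
halfspaces are totally ordered by strict inclusion (equivalently, each wall separates
its neighbours). -/
def IsChain' (c : Set (Set X)) : Prop :=
  ∃ σ : Set X → Set X, (∀ h ∈ c, σ h = h ∨ σ h = hᶜ) ∧
    ∀ h ∈ c, ∀ k ∈ c, h ≠ k → σ h ⊂ σ k ∨ σ k ⊂ σ h

/-- The walls of `h` and `k` cross: all four quarterspaces are nonempty. -/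
def Crosses (h k : Set X) : Prop :=
  (h ∩ k).Nonempty ∧ (h ∩ kᶜ).Nonempty ∧ (hᶜ ∩ k).Nonempty ∧ (hᶜ ∩ kᶜ).Nonempty

/-- `c₁ ∪ c₂` is a chain in which all of `c₁` precedes all of `c₂`
(i.e. `c₁ ⊆ c₂⁻`). -/
def ChainPrec (c₁ c₂ : Set (Set X)) : Prop :=
  ∃ σ : Set X → Set X, (∀ h ∈ c₁ ∪ c₂, σ h = h ∨ σ h = hᶜ) ∧
    (∀ h ∈ c₁ ∪ c₂, ∀ k ∈ c₁ ∪ c₂, h ≠ k → σ h ⊂ σ k ∨ σ k ⊂ σ h) ∧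
    ∀ h ∈ c₁, ∀ k ∈ c₂, σ h ⊆ σ k

/-- `D` is `m`-gluable. -/
def Gluable (D : Set (Set (Set X))) (m : ℕ) : Prop :=
  ∀ c₁ ∈ D, ∀ c₂ ∈ D, ChainPrec c₁ c₂ →
    ∃ e ⊆ c₁ ∪ c₂, e.encard ≤ (m : ℕ∞) ∧ (c₁ ∪ c₂) \ e ∈ D

/-- `D` is `L`-separated. -/
def Separated (D : Set (Set (Set X))) (L : ℕ) : Prop :=
  ∀ h₁ h₂ : Set X, ({h₁, h₂} : Set (Set X)) ∈ D → h₁ ≠ h₂ →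
    ∀ c ∈ D, (∀ k ∈ c, Crosses k h₁ ∧ Crosses k h₂) → c.encard ≤ (L : ℕ∞)

/-- The median of three ultrafilters, given by majority vote on each wall. -/
def medUF (x y z : Set (Set X)) : Set (Set X) := x ∩ y ∪ x ∩ z ∪ y ∩ z

/-- The halfspace `h` (with `x` on the `h`-side) separates `x` from the set `A` of
ultrafilters. -/
def SepsFromSet (x : Set (Set X)) (A : Set (Set (Set X))) (h : Set X) : Prop :=
  h ∈ x ∧ ∀ a ∈ A, h ∉ a

/-- The gate map to `A`: `gateMap A x` is obtained from `x` by reversing exactly the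
walls separating `x` from `A`. -/
def gateMap (A : Set (Set (Set X))) (x : Set (Set X)) : Set (Set X) :=
  {h | (h ∈ x ∧ ¬ SepsFromSet x A h) ∨ (h ∉ x ∧ SepsFromSet x A hᶜ)}

/-- `A` is a gated subset of the dual space: it is nonempty and is the intersection of
the dual space with a collection of halfspaces. -/
def IsGated (H : Set (Set X)) (D : Set (Set (Set X))) (A : Set (Set (Set X))) : Prop :=
  A.Nonempty ∧ ∃ H' ⊆ H, A = {x ∈ dualSpace H D | H' ⊆ x}

/-- The halfspace `h`, regarded as a subset of the dual space. -/
def halfSet (H : Set (Set X)) (D : Set (Set (Set X))) (h : Set X) : Set (Set (Set X)) :=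
  {x ∈ dualSpace H D | h ∈ x}

/-! ### Walls of a quasitree coming from balls -/

variable (T : Type*) [MetricSpace T]

/-- `h` is (a halfspace of) one of the two walls of `T` determined by a connected
component `Ct` of the complement of the `K`-ball centred at `t`, namely the bipartitions
`(Ct, T ∖ Ct)` and `(Ct ∪ B, T ∖ (Ct ∪ B))`. -/
def wallFromBall (K : ℝ) (t : T) (h : Set T) : Prop :=
  ∃ Ct : Set T, (∃ p ∈ (closedBall t K)ᶜ, Ct = connectedComponentIn (closedBall t K)ᶜ p) ∧
    (h = Ct ∨ h = Ctᶜ ∨ h = Ct ∪ closedBall t K ∨ h = (Ct ∪ closedBall t K)ᶜ)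

/-- The walls of `T` determined by complementary components of `K`-balls. -/
def ballWalls (K : ℝ) : Set (Set T) := {h | ∃ t : T, wallFromBall T K t h}

/-- Disparate chains of ball-walls: chains of walls admitting defining `K`-balls whose
centres are pairwise at distance at least `10K`. -/
def disparateChains (K : ℝ) : Set (Set (Set T)) :=
  {c | IsChain' c ∧ ∃ β : Set T → T, (∀ h ∈ c, wallFromBall T K (β h) h) ∧
    ∀ h ∈ c, ∀ k ∈ c, h ≠ k → 10 * K ≤ dist (β h) (β k)}

/-! ### The image of a space in a product of dual quasitrees, and its walls -/

variable {m : ℕ}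

/-- The image `S` of `X` in the product `∏ T_{D_i}` of the dual quasitrees: tuples of
principal ultrafilters of the coordinates of points `f x`. -/
def SProd (T : Fin m → Type v) [∀ i, MetricSpace (T i)] (K : Fin m → ℝ)
    (f : X → ∀ i, T i) : Type _ :=
  {p : ∀ i, Set (Set (T i)) // ∃ x : X, p = fun i => pUF (ballWalls (T i) (K i)) (f x i)}

/-- The natural map `X → S`. -/
def sEmb (T : Fin m → Type v) [∀ i, MetricSpace (T i)] (K : Fin m → ℝ)
    (f : X → ∀ i, T i) (x : X) : SProd T K f :=
  ⟨fun i => pUF (ballWalls (T i) (K i)) (f x i), ⟨x, rfl⟩⟩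

/-- The `ℓ¹` metric on `S ⊆ ∏ T_{D_i}`. -/
noncomputable def dS (T : Fin m → Type v) [∀ i, MetricSpace (T i)] (K : Fin m → ℝ)
    (f : X → ∀ i, T i) (p q : SProd T K f) : ℝ :=
  ∑ i, dDr (disparateChains (T i) (K i)) (p.1 i) (q.1 i)

/-- The halfspace of `S` induced by the halfspace `h` of the `i`-th factor. -/
def indHalf (T : Fin m → Type v) [∀ i, MetricSpace (T i)] (K : Fin m → ℝ)
    (f : X → ∀ i, T i) (i : Fin m) (h : Set (T i)) : Set (SProd T K f) :=
  {s | h ∈ s.1 i}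

/-- The walls `W` on `S` induced by the ball-walls of the factors; two such walls cross
exactly when `S` meets all four quarterspaces. -/
def indWalls (T : Fin m → Type v) [∀ i, MetricSpace (T i)] (K : Fin m → ℝ)
    (f : X → ∀ i, T i) : Set (Set (SProd T K f)) :=
  {A | ∃ (i : Fin m) (h : Set (T i)), h ∈ ballWalls (T i) (K i) ∧
    (A = indHalf T K f i h ∨ A = (indHalf T K f i h)ᶜ)}

/-- The monochromatic collections of walls of `S` of colour `i`: images of disparate
chains of the `i`-th factor. -/
def indMono (T : Fin m → Type v) [∀ i, MetricSpace (T i)] (K : Fin m → ℝ)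
    (f : X → ∀ i, T i) (i : Fin m) : Set (Set (Set (SProd T K f))) :=
  {d | ∃ c ∈ disparateChains (T i) (K i), d = (indHalf T K f i) '' c}

/-- `D¹`: unions, over the factors, of (induced) disparate chains. -/
def bigD1 (T : Fin m → Type v) [∀ i, MetricSpace (T i)] (K : Fin m → ℝ)
    (f : X → ∀ i, T i) : Set (Set (Set (SProd T K f))) :=
  {d | ∃ e : ∀ _ : Fin m, Set (Set (SProd T K f)),
    (∀ i, e i ∈ indMono T K f i) ∧ d = ⋃ i, e i}

/-- `D`: the elements of `D¹` that are chains. -/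
def bigD (T : Fin m → Type v) [∀ i, MetricSpace (T i)] (K : Fin m → ℝ)
    (f : X → ∀ i, T i) : Set (Set (Set (SProd T K f))) :=
  {d ∈ bigD1 T K f | IsChain' d}

/-- `d` is an `L`-chain with respect to the system `D`: any member of `D` all of whose
elements cross two given elements of `d` has cardinality at most `L`. -/
def LChainIn {Z : Type*} (D : Set (Set (Set Z))) (L : ℕ) (d : Set (Set Z)) : Prop :=
  ∀ h ∈ d, ∀ k ∈ d, ∀ d' ∈ D, (∀ w ∈ d', Crosses w h ∧ Crosses w k) →
    d'.encard ≤ (L : ℕ∞)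

/-- `C`: the `L`-chains of `D`. -/
def bigC (T : Fin m → Type v) [∀ i, MetricSpace (T i)] (K : Fin m → ℝ)
    (f : X → ∀ i, T i) (L : ℕ) : Set (Set (Set (SProd T K f))) :=
  {d ∈ bigD T K f | LChainIn (bigD T K f) L d}

/-! ### Intervals, distant walls and gates in the dual space `S_C` -/

variable {Z : Type*}

/-- `H(x,y)`: the walls not separating `x` from `y`, oriented (i.e. represented by the
halfspace) so that both `x` and `y` choose them. -/
def Hxy (W : Set (Set Z)) (x y : Set (Set Z)) : Set (Set Z) := {h ∈ W | h ∈ x ∧ h ∈ y}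

/-- The interval `[x,y] = ∩_{h ∈ H(x,y)} h⁺` in the dual space. -/
def interval (W : Set (Set Z)) (D : Set (Set (Set Z))) (x y : Set (Set Z)) :
    Set (Set (Set Z)) :=
  {z ∈ dualSpace W D | Hxy W x y ⊆ z}

/-- `H^L(x,y)`: the distant walls, i.e. the walls of `H(x,y)` such that every
monochromatic chain of `Cc` separating `x` from `y` and crossing them has length at
most `L`. -/
def distantWalls (W : Set (Set Z)) (Cc : Set (Set (Set Z))) (Mono : Set (Set Z) → Prop)
    (L : ℕ) (x y : Set (Set Z)) : Set (Set Z) :=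
  {h ∈ Hxy W x y | ∀ c ∈ Cc, Mono c → Seps x y c → (∀ w ∈ c, Crosses w h) →
    c.encard ≤ (L : ℕ∞)}

/-- `I(x,y) = ∩_{h ∈ H^L(x,y)} h⁺`. -/
def Ixy (W : Set (Set Z)) (Cc : Set (Set (Set Z))) (Mono : Set (Set Z) → Prop)
    (L : ℕ) (x y : Set (Set Z)) : Set (Set (Set Z)) :=
  {z ∈ dualSpace W Cc | distantWalls W Cc Mono L x y ⊆ z}

/-- The halfspace `h⁻`, regarded as a subset of the dual space (the ultrafilters not
choosing `h`). -/
def negSide (W : Set (Set Z)) (D : Set (Set (Set Z))) (h : Set Z) : Set (Set (Set Z)) :=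
  {x ∈ dualSpace W D | h ∉ x}

/-- `H^L_t(x,y)`: the distant walls whose gate to `[x,y]` lies in the ball of radius `t`
about `x`. -/
def HLt (W : Set (Set Z)) (Cc : Set (Set (Set Z))) (Mono : Set (Set Z) → Prop)
    (L : ℕ) (x y : Set (Set Z)) (t : ℝ) : Set (Set Z) :=
  {h ∈ distantWalls W Cc Mono L x y |
    ∀ u ∈ gateMap (interval W Cc x y) '' negSide W Cc h, dDr Cc x u ≤ t}


/-! ### Auxiliary lemmas for Statement 18 -/

section AuxUF

variable {Z : Type*}

lemma IsUF.mem_compl_iff {H a : Set (Set Z)} (hUF : IsUF H a) {k : Set Z} (hk : k ∈ H) :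
    kᶜ ∈ a ↔ k ∉ a := by
  have h2 := hUF.2.1 k hk
  constructor
  · intro h hka; exact (h2.mp hka) h
  · intro h; by_contra hkc; exact h (h2.mpr hkc)

lemma mem_medUF {x y z : Set (Set Z)} {k : Set Z} :
    k ∈ medUF x y z ↔ (k ∈ x ∧ k ∈ y) ∨ (k ∈ x ∧ k ∈ z) ∨ (k ∈ y ∧ k ∈ z) := by
  unfold medUF
  simp only [Set.mem_union, Set.mem_inter_iff]
  tauto

lemma medUF_isUF {H x y z : Set (Set Z)} (hx : IsUF H x) (hy : IsUF H y) (hz : IsUF H z) :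
    IsUF H (medUF x y z) := by
  refine ⟨?_, ?_, ?_⟩
  · intro k hk
    rcases mem_medUF.mp hk with ⟨a, -⟩ | ⟨a, -⟩ | ⟨a, -⟩
    exacts [hx.1 a, hx.1 a, hy.1 a]
  · intro k hk
    have e1 : kᶜ ∈ x ↔ k ∉ x := hx.mem_compl_iff hk
    have e2 : kᶜ ∈ y ↔ k ∉ y := hy.mem_compl_iff hk
    have e3 : kᶜ ∈ z ↔ k ∉ z := hz.mem_compl_iff hk
    rw [mem_medUF, show (kᶜ ∉ medUF x y z) ↔
      ¬((kᶜ ∈ x ∧ kᶜ ∈ y) ∨ (kᶜ ∈ x ∧ kᶜ ∈ z) ∨ (kᶜ ∈ y ∧ kᶜ ∈ z)) from not_congr mem_medUF,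
      e1, e2, e3]
    tauto
  · intro k hk k' hk' hsub
    rcases mem_medUF.mp hk with ⟨ha, hb⟩ | ⟨ha, hb⟩ | ⟨ha, hb⟩
    · exact mem_medUF.mpr (Or.inl ⟨hx.2.2 k ha k' hk' hsub, hy.2.2 k hb k' hk' hsub⟩)
    · exact mem_medUF.mpr (Or.inr (Or.inl ⟨hx.2.2 k ha k' hk' hsub, hz.2.2 k hb k' hk' hsub⟩))
    · exact mem_medUF.mpr (Or.inr (Or.inr ⟨hy.2.2 k ha k' hk' hsub, hz.2.2 k hb k' hk' hsub⟩))

/-! dD basics -/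

lemma dD_le {D : Set (Set (Set Z))} {a b : Set (Set Z)} {N : ℕ∞}
    (h : ∀ c ∈ D, Seps a b c → c.encard ≤ N) : dD D a b ≤ N :=
  iSup_le fun c => iSup_le fun hc => h c hc.1 hc.2

lemma le_dD {D : Set (Set (Set Z))} {a b c : Set (Set Z)} (hc : c ∈ D) (hs : Seps a b c) :
    c.encard ≤ dD D a b :=
  le_iSup_of_le c (le_iSup_of_le ⟨hc, hs⟩ le_rfl)

lemma dD_mono_seps {D : Set (Set (Set Z))} {a b a' b' : Set (Set Z)}
    (himp : ∀ c, Seps a b c → Seps a' b' c) : dD D a b ≤ dD D a' b' :=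
  dD_le fun c hc hs => le_dD hc (himp c hs)

lemma dD_triangle {D : Set (Set (Set Z))} (hsub : ∀ c ∈ D, ∀ c' ⊆ c, c' ∈ D)
    (a b d : Set (Set Z)) : dD D a b ≤ dD D a d + dD D d b := by
  classical
  apply dD_le
  intro c hc hs
  have hunion : c = {w ∈ c | (w ∈ a ↔ w ∉ d)} ∪ {w ∈ c | ¬(w ∈ a ↔ w ∉ d)} := by
    ext w
    simp only [Set.mem_union, Set.mem_setOf_eq]
    tauto
  have h1 : Seps a d {w ∈ c | (w ∈ a ↔ w ∉ d)} := fun w hw => hw.2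
  have h2 : Seps d b {w ∈ c | ¬(w ∈ a ↔ w ∉ d)} := by
    intro w hw
    have h3 := hs w hw.1
    have h4 := hw.2
    tauto
  calc c.encard = ({w ∈ c | (w ∈ a ↔ w ∉ d)} ∪ {w ∈ c | ¬(w ∈ a ↔ w ∉ d)}).encard := by
        rw [← hunion]
    _ ≤ _ + _ := Set.encard_union_le _ _
    _ ≤ dD D a d + dD D d b :=
        add_le_add (le_dD (hsub c hc _ fun w hw => hw.1) h1)
          (le_dD (hsub c hc _ fun w hw => hw.1) h2)

/-! Crossing basics -/

lemma crosses_compl_left {a b : Set Z} : Crosses aᶜ b ↔ Crosses a b := by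
  unfold Crosses
  rw [compl_compl]
  tauto

lemma not_crosses_cases {a b : Set Z} (h : ¬ Crosses a b) :
    a ⊆ bᶜ ∨ a ⊆ b ∨ b ⊆ a ∨ bᶜ ⊆ a := by
  by_cases h1 : (a ∩ b).Nonempty
  · by_cases h2 : (a ∩ bᶜ).Nonempty
    · by_cases h3 : (aᶜ ∩ b).Nonempty
      · by_cases h4 : (aᶜ ∩ bᶜ).Nonempty
        · exact absurd ⟨h1, h2, h3, h4⟩ h
        · exact Or.inr (Or.inr (Or.inr fun p hp => by
            by_contra hpa; exact h4 ⟨p, hpa, hp⟩))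
      · exact Or.inr (Or.inr (Or.inl fun p hp => by
          by_contra hpa; exact h3 ⟨p, hpa, hp⟩))
    · exact Or.inr (Or.inl fun p hp => by
        by_contra hpb; exact h2 ⟨p, hp, hpb⟩)
  · exact Or.inl fun p hp => by
      intro hpb; exact h1 ⟨p, hp, hpb⟩

/-! gateMap basics -/

variable {H : Set (Set Z)} {A : Set (Set (Set Z))} {x y v : Set (Set Z)}

lemma gate_hxy_subset (hvUF : IsUF H v) (hA : ∀ a ∈ A, IsUF H a) (hxA : x ∈ A)
    (hAx : ∀ a ∈ A, Hxy H x y ⊆ a) : Hxy H x y ⊆ gateMap A v := by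
  intro k hk
  have hkH : k ∈ H := hk.1
  by_cases hkv : k ∈ v
  · exact Or.inl ⟨hkv, fun hc => hc.2 x hxA (hAx x hxA hk)⟩
  · refine Or.inr ⟨hkv, ⟨(hvUF.mem_compl_iff hkH).mpr hkv, ?_⟩⟩
    intro a ha hkca
    exact ((hA a ha).mem_compl_iff hkH).mp hkca (hAx a ha hk)

lemma gate_not_both (hvUF : IsUF H v) {k : Set Z} (hk : k ∈ H) :
    ¬ (k ∈ gateMap A v ∧ kᶜ ∈ gateMap A v) := by
  rintro ⟨h1, h2⟩
  have hnb : ¬ (k ∈ v ∧ kᶜ ∈ v) := fun hp => (hvUF.2.1 k hk).mp hp.1 hp.2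
  rcases h1 with ⟨hkv, hns⟩ | ⟨hkv, hs⟩ <;>
    rcases h2 with ⟨hkcv, hns2⟩ | ⟨hkcv, hs2⟩
  · exact hnb ⟨hkv, hkcv⟩
  · rw [compl_compl] at hs2; exact hns hs2
  · exact hns2 hs
  · rw [compl_compl] at hs2; exact hkv hs2.1

lemma gate_split_agree (hvUF : IsUF H v) (hA : ∀ a ∈ A, IsUF H a) (hxA : x ∈ A)
    (hyA : y ∈ A) {k : Set Z} (hk : k ∈ H) (hsep : k ∈ x ↔ k ∉ y) :
    k ∈ gateMap A v ↔ k ∈ v := by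
  constructor
  · rintro (⟨hkv, -⟩ | ⟨-, -, hall⟩)
    · exact hkv
    · exfalso
      have h1 : k ∈ x := by
        by_contra hkx
        exact hall x hxA (((hA x hxA).mem_compl_iff hk).mpr hkx)
      have h2 : k ∈ y := by
        by_contra hky
        exact hall y hyA (((hA y hyA).mem_compl_iff hk).mpr hky)
      exact (hsep.mp h1) h2
  · intro hkv
    refine Or.inl ⟨hkv, ?_⟩
    rintro ⟨-, hall⟩
    exact hall x hxA (hsep.mpr (hall y hyA))

lemma gateMap_eq_medUF {z : Set (Set Z)} (hW : WallClosed H) (hxUF : IsUF H x)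
    (hyUF : IsUF H y) (hzUF : IsUF H z) (hA : ∀ a ∈ A, IsUF H a) (hxA : x ∈ A)
    (hyA : y ∈ A) (hAx : ∀ a ∈ A, Hxy H x y ⊆ a) :
    gateMap A z = medUF x y z := by
  ext k
  constructor
  · rintro (⟨hkz, hcon⟩ | ⟨hkz, hkcz, hall⟩)
    · have hka : ∃ a ∈ A, k ∈ a := by
        by_contra hno
        push_neg at hno
        exact hcon ⟨hkz, hno⟩
      obtain ⟨a, haA, hka⟩ := hka
      have hkH : k ∈ H := hzUF.1 hkz
      by_cases hkx : k ∈ x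
      · exact mem_medUF.mpr (Or.inr (Or.inl ⟨hkx, hkz⟩))
      by_cases hky : k ∈ y
      · exact mem_medUF.mpr (Or.inr (Or.inr ⟨hky, hkz⟩))
      exfalso
      have hkcx : kᶜ ∈ x := (hxUF.mem_compl_iff hkH).mpr hkx
      have hkcy : kᶜ ∈ y := (hyUF.mem_compl_iff hkH).mpr hky
      have hkc : kᶜ ∈ a := hAx a haA ⟨hW k hkH, hkcx, hkcy⟩
      exact ((hA a haA).mem_compl_iff hkH).mp hkc hka
    · have hkH : k ∈ H := by
        have := hW kᶜ (hzUF.1 hkcz)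
        rwa [compl_compl] at this
      have hkx : k ∈ x := by
        by_contra hkx
        exact hall x hxA ((hxUF.mem_compl_iff hkH).mpr hkx)
      have hky : k ∈ y := by
        by_contra hky
        exact hall y hyA ((hyUF.mem_compl_iff hkH).mpr hky)
      exact mem_medUF.mpr (Or.inl ⟨hkx, hky⟩)
  · intro hk
    rcases mem_medUF.mp hk with ⟨hkx, hky⟩ | ⟨hkx, hkz⟩ | ⟨hky, hkz⟩
    · have hkH : k ∈ H := hxUF.1 hkx
      by_cases hkz : k ∈ z
      · exact Or.inl ⟨hkz, fun hcon => hcon.2 x hxA hkx⟩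
      · refine Or.inr ⟨hkz, ⟨(hzUF.mem_compl_iff hkH).mpr hkz, ?_⟩⟩
        intro a ha hkca
        exact ((hA a ha).mem_compl_iff hkH).mp hkca (hAx a ha ⟨hkH, hkx, hky⟩)
    · exact Or.inl ⟨hkz, fun hcon => hcon.2 x hxA hkx⟩
    · exact Or.inl ⟨hkz, fun hcon => hcon.2 y hyA hky⟩

lemma isChain'_subset {c c' : Set (Set Z)} (h : IsChain' c) (hsub : c' ⊆ c) : IsChain' c' :=
  ⟨h.choose, fun a ha => h.choose_spec.1 a (hsub ha),
    fun a ha b hb hne => h.choose_spec.2 a (hsub ha) b (hsub hb) hne⟩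

lemma encard_iUnion_le_card_mul {α : Type*} {N : ℕ} :
    ∀ {n : ℕ} (A : Fin n → Set α), (∀ i, (A i).encard ≤ (N : ℕ∞)) →
      (⋃ i, A i).encard ≤ ((n * N : ℕ) : ℕ∞) := by
  intro n
  induction n with
  | zero => intro A h; simp
  | succ n ih =>
    intro A h
    have hsplit : (⋃ i, A i) = (⋃ i : Fin n, A i.castSucc) ∪ A (Fin.last n) := by
      ext w
      simp only [Set.mem_iUnion, Set.mem_union]
      constructor
      · rintro ⟨i, hi⟩
        rcases Fin.eq_castSucc_or_eq_last i with ⟨j, rfl⟩ | rfl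
        · exact Or.inl ⟨j, hi⟩
        · exact Or.inr hi
      · rintro (⟨j, hj⟩ | hlast)
        · exact ⟨j.castSucc, hj⟩
        · exact ⟨Fin.last n, hlast⟩
    rw [hsplit]
    refine le_trans (Set.encard_union_le _ _) ?_
    calc (⋃ i : Fin n, A i.castSucc).encard + (A (Fin.last n)).encard
        ≤ ((n * N : ℕ) : ℕ∞) + (N : ℕ∞) :=
          add_le_add (ih (fun i => A i.castSucc) fun i => h i.castSucc) (h (Fin.last n))
      _ = (((n + 1) * N : ℕ) : ℕ∞) := by
          rw [← Nat.cast_add]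
          congr 1
          ring

end AuxUF


section AuxBigC

variable {X : Type u} {m : ℕ} {T : Fin m → Type v} [∀ i, MetricSpace (T i)]
  {K : Fin m → ℝ} {f : X → ∀ i, T i} {L : ℕ}

lemma indWalls_wallClosed : WallClosed (indWalls T K f) := by
  rintro A ⟨i, h', hball, hform⟩
  rcases hform with rfl | rfl
  · exact ⟨i, h', hball, Or.inr rfl⟩
  · exact ⟨i, h', hball, Or.inl (compl_compl _)⟩

lemma indMono_subset_closed {i : Fin m} {d d' : Set (Set (SProd T K f))}
    (hd : d ∈ indMono T K f i) (hsub : d' ⊆ d) : d' ∈ indMono T K f i := by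
  obtain ⟨c, hc, rfl⟩ := hd
  refine ⟨{a ∈ c | indHalf T K f i a ∈ d'}, ?_, ?_⟩
  · obtain ⟨⟨σ, hσ1, hσ2⟩, β, hβ1, hβ2⟩ := hc
    exact ⟨⟨σ, fun h hh => hσ1 h hh.1, fun h hh k hk hne => hσ2 h hh.1 k hk.1 hne⟩,
      β, fun h hh => hβ1 h hh.1, fun h hh k hk hne => hβ2 h hh.1 k hk.1 hne⟩
  · ext b
    constructor
    · intro hb
      obtain ⟨a, ha, hab⟩ := hsub hb
      exact ⟨a, ⟨ha, by rw [hab]; exact hb⟩, hab⟩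
    · rintro ⟨a, ha, rfl⟩
      exact ha.2

lemma bigD1_subset_closed {d d' : Set (Set (SProd T K f))} (hd : d ∈ bigD1 T K f)
    (hsub : d' ⊆ d) : d' ∈ bigD1 T K f := by
  obtain ⟨e, he, rfl⟩ := hd
  refine ⟨fun i => e i ∩ d', fun i => indMono_subset_closed (he i) inter_subset_left, ?_⟩
  ext w
  simp only [Set.mem_iUnion, Set.mem_inter_iff]
  constructor
  · intro hw
    obtain ⟨i, hi⟩ := Set.mem_iUnion.mp (hsub hw)
    exact ⟨i, hi, hw⟩
  · rintro ⟨i, -, hw⟩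
    exact hw

lemma bigD_subset_closed {d d' : Set (Set (SProd T K f))} (hd : d ∈ bigD T K f)
    (hsub : d' ⊆ d) : d' ∈ bigD T K f :=
  ⟨bigD1_subset_closed hd.1 hsub, isChain'_subset hd.2 hsub⟩

lemma bigC_subset_closed : ∀ c ∈ bigC T K f L, ∀ c' ⊆ c, c' ∈ bigC T K f L :=
  fun c hc c' hsub => ⟨bigD_subset_closed hc.1 hsub,
    fun a ha b hb d' hd' hcr => hc.2 a (hsub ha) b (hsub hb) d' hd' hcr⟩

lemma bigD1_subset_walls {d : Set (Set (SProd T K f))} (hd : d ∈ bigD1 T K f) :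
    d ⊆ indWalls T K f := by
  obtain ⟨e, he, rfl⟩ := hd
  intro w hw
  obtain ⟨i, hi⟩ := Set.mem_iUnion.mp hw
  obtain ⟨c, hc, hei⟩ := he i
  rw [hei] at hi
  obtain ⟨a, ha, rfl⟩ := hi
  obtain ⟨-, β, hβ1, -⟩ := hc
  exact ⟨i, a, ⟨β a, hβ1 a ha⟩, Or.inl rfl⟩

set_option maxHeartbeats 8000000 in
lemma gate_close_to_med {x y z v : Set (Set (SProd T K f))}
    (hx : x ∈ dualSpace (indWalls T K f) (bigC T K f L))
    (hy : y ∈ dualSpace (indWalls T K f) (bigC T K f L))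
    (hz : z ∈ dualSpace (indWalls T K f) (bigC T K f L))
    (hvUF : IsUF (indWalls T K f) v)
    {h : Set (SProd T K f)} (hhW : h ∈ indWalls T K f) (hhx : h ∈ x) (hhy : h ∈ y)
    (hdist : ∀ c ∈ bigC T K f L, (∃ i', c ∈ indMono T K f i') → Seps x y c →
      (∀ w ∈ c, Crosses w h) → c.encard ≤ (L : ℕ∞))
    {c₁ : Set (Set (SProd T K f))} (hc₁C : c₁ ∈ bigC T K f L)
    (hc₁M : ∃ i', c₁ ∈ indMono T K f i') (hc₁S : Seps x z c₁)
    (hc₁X : ∀ w ∈ c₁, Crosses w h) (hc₁L : ¬ c₁.encard ≤ (L : ℕ∞))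
    (hhv : h ∉ v) :
    dD (bigC T K f L) (medUF x y z)
      (gateMap (interval (indWalls T K f) (bigC T K f L) x y) v)
      ≤ ((m * L + L : ℕ) : ℕ∞) := by
  classical
  set W := indWalls T K f with hWdef
  set Cc := bigC T K f L with hCdef
  set A := interval W Cc x y with hAdef
  set u := gateMap A v with hudef
  set μ := medUF x y z with hμdef
  have hWc : WallClosed W := indWalls_wallClosed
  have hxUF : IsUF W x := hx.1
  have hyUF : IsUF W y := hy.1
  have hzUF : IsUF W z := hz.1
  have hμUF : IsUF W μ := medUF_isUF hxUF hyUF hzUF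
  have hxA : x ∈ A := ⟨hx, fun k hk => hk.2.1⟩
  have hyA : y ∈ A := ⟨hy, fun k hk => hk.2.2⟩
  have hAUF : ∀ a ∈ A, IsUF W a := fun a ha => ha.1.1
  have hAx : ∀ a ∈ A, Hxy W x y ⊆ a := fun a ha => ha.2
  have hsubC : ∀ c ∈ Cc, ∀ c' ⊆ c, c' ∈ Cc := bigC_subset_closed
  have hhcv : hᶜ ∈ v := (hvUF.mem_compl_iff hhW).mpr hhv
  -- a wall of c₁ that does not separate x from y
  have hc1sub : {w ∈ c₁ | (w ∈ x ↔ w ∉ y)} ⊆ c₁ := fun w hw => hw.1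
  obtain ⟨i', hi'⟩ := hc₁M
  have hc1' : {w ∈ c₁ | (w ∈ x ↔ w ∉ y)}.encard ≤ (L : ℕ∞) :=
    hdist {w ∈ c₁ | (w ∈ x ↔ w ∉ y)} (hsubC c₁ hc₁C _ hc1sub)
      ⟨i', indMono_subset_closed hi' hc1sub⟩
      (fun w hw => hw.2) (fun w hw => hc₁X w (hc1sub hw))
  obtain ⟨ch, hch₁, hchns⟩ : ∃ w ∈ c₁, ¬(w ∈ x ↔ w ∉ y) := by
    by_contra hcon
    push_neg at hcon
    have hsub2 : c₁ ⊆ {w ∈ c₁ | (w ∈ x ↔ w ∉ y)} := fun w hw => ⟨hw, hcon w hw⟩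
    exact hc₁L (le_trans (Set.encard_mono hsub2) hc1')
  have hchW : ch ∈ W := bigD1_subset_walls hc₁C.1.1 hch₁
  have hchsep : ch ∈ x ↔ ch ∉ z := hc₁S ch hch₁
  have hchxy : ch ∈ x ↔ ch ∈ y := by
    by_cases h1 : ch ∈ x <;> by_cases h2 : ch ∈ y
    · exact iff_of_true h1 h2
    · exact absurd ⟨fun _ => h2, fun _ => h1⟩ hchns
    · exact absurd ⟨fun hc => absurd hc h1, fun hn => absurd h2 hn⟩ hchns
    · exact iff_of_false h1 h2
  obtain ⟨X₀, Z₀, hXform, hX₀x, hX₀y, hX₀z, hZ₀x, hZ₀y, hZ₀z⟩ :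
      ∃ X₀ Z₀ : Set (SProd T K f), ((X₀ = ch ∧ Z₀ = chᶜ) ∨ (X₀ = chᶜ ∧ Z₀ = ch)) ∧
        X₀ ∈ x ∧ X₀ ∈ y ∧ X₀ ∉ z ∧ Z₀ ∉ x ∧ Z₀ ∉ y ∧ Z₀ ∈ z := by
    by_cases hcx : ch ∈ x
    · have hcy : ch ∈ y := hchxy.mp hcx
      have hcz : ch ∉ z := hchsep.mp hcx
      exact ⟨ch, chᶜ, Or.inl ⟨rfl, rfl⟩, hcx, hcy, hcz,
        fun hc => (hxUF.2.1 ch hchW).mp hcx hc,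
        fun hc => (hyUF.2.1 ch hchW).mp hcy hc,
        (hzUF.mem_compl_iff hchW).mpr hcz⟩
    · have hcy : ch ∉ y := fun hy' => hcx (hchxy.mpr hy')
      have hcz : ch ∈ z := by
        by_contra hcz
        exact hcx (hchsep.mpr hcz)
      exact ⟨chᶜ, ch, Or.inr ⟨rfl, rfl⟩, (hxUF.mem_compl_iff hchW).mpr hcx,
        (hyUF.mem_compl_iff hchW).mpr hcy,
        fun hc => ((hzUF.mem_compl_iff hchW).mp hc) hcz, hcx, hcy, hcz⟩
  have hX₀W : X₀ ∈ W := by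
    rcases hXform with ⟨rfl, -⟩ | ⟨rfl, -⟩
    · exact hchW
    · exact hWc ch hchW
  have hZ₀W : Z₀ ∈ W := by
    rcases hXform with ⟨-, rfl⟩ | ⟨-, rfl⟩
    · exact hWc ch hchW
    · exact hchW
  have hZ₀μ : Z₀ ∉ μ := by
    intro hmem
    rcases mem_medUF.mp hmem with ⟨ha, -⟩ | ⟨ha, -⟩ | ⟨ha, -⟩
    exacts [hZ₀x ha, hZ₀x ha, hZ₀y ha]
  have hCrosschh : Crosses ch h := hc₁X ch hch₁
  -- the main bound
  apply dD_le
  intro g hgC hgS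
  have hgD1 : g ∈ bigD1 T K f := hgC.1.1
  have hgW : g ⊆ W := bigD1_subset_walls hgD1
  -- every wall of g separates x from y
  have hsepxy : ∀ w ∈ g, (w ∈ x ∧ w ∉ y) ∨ (w ∉ x ∧ w ∈ y) := by
    intro w hw
    have hwW : w ∈ W := hgW hw
    have hiff := hgS w hw
    by_cases hwx : w ∈ x <;> by_cases hwy : w ∈ y
    · exfalso
      have hwμ : w ∈ μ := mem_medUF.mpr (Or.inl ⟨hwx, hwy⟩)
      have hwu : w ∈ u := gate_hxy_subset hvUF hAUF hxA hAx ⟨hwW, hwx, hwy⟩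
      exact (hiff.mp hwμ) hwu
    · exact Or.inl ⟨hwx, hwy⟩
    · exact Or.inr ⟨hwx, hwy⟩
    · exfalso
      have hwcx : wᶜ ∈ x := (hxUF.mem_compl_iff hwW).mpr hwx
      have hwcy : wᶜ ∈ y := (hyUF.mem_compl_iff hwW).mpr hwy
      have h1 : wᶜ ∈ μ := mem_medUF.mpr (Or.inl ⟨hwcx, hwcy⟩)
      have h2 : wᶜ ∈ u := gate_hxy_subset hvUF hAUF hxA hAx ⟨hWc w hwW, hwcx, hwcy⟩
      have hwnμ : w ∉ μ := (hμUF.mem_compl_iff hwW).mp h1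
      have hwnu : w ∉ u := fun hwu => gate_not_both hvUF hwW ⟨hwu, h2⟩
      exact hwnμ (hiff.mpr hwnu)
  -- every wall of g not crossing h crosses ch
  have hkey : ∀ w ∈ g, ¬ Crosses w h → Crosses w ch := by
    intro w hw hncross
    have hwW : w ∈ W := hgW hw
    have hiff := hgS w hw
    have hsep := hsepxy w hw
    obtain ⟨wh, hwhform, hwhμ, hwhu, hwhxy⟩ :
        ∃ wh, (wh = w ∨ wh = wᶜ) ∧ wh ∈ μ ∧ wh ∉ u ∧ ((wh ∈ x ∧ wh ∉ y) ∨ (wh ∉ x ∧ wh ∈ y)) := by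
      by_cases hwμ : w ∈ μ
      · exact ⟨w, Or.inl rfl, hwμ, hiff.mp hwμ, hsep⟩
      · have hwu : w ∈ u := by
          by_contra hwu
          exact hwμ (hiff.mpr hwu)
        refine ⟨wᶜ, Or.inr rfl, (hμUF.mem_compl_iff hwW).mpr hwμ,
          fun hc => gate_not_both hvUF hwW ⟨hwu, hc⟩, ?_⟩
        rcases hsep with ⟨h1, h2⟩ | ⟨h1, h2⟩
        · exact Or.inr ⟨(hxUF.2.1 w hwW).mp h1, (hyUF.mem_compl_iff hwW).mpr h2⟩
        · exact Or.inl ⟨(hxUF.mem_compl_iff hwW).mpr h1, (hyUF.2.1 w hwW).mp h2⟩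
    have hwhW : wh ∈ W := by
      rcases hwhform with rfl | rfl
      · exact hwW
      · exact hWc w hwW
    have hwhz : wh ∈ z := by
      rcases mem_medUF.mp hwhμ with ⟨ha, hb⟩ | ⟨-, hb⟩ | ⟨-, hb⟩
      · rcases hwhxy with ⟨-, h2⟩ | ⟨h1, -⟩
        · exact absurd hb h2
        · exact absurd ha h1
      · exact hb
      · exact hb
    have hncrosswh : ¬ Crosses wh h := by
      rcases hwhform with rfl | rfl
      · exact hncross
      · exact fun hc => hncross (crosses_compl_left.mp hc)
    have hwhsub : wh ⊆ h := by
      rcases not_crosses_cases hncrosswh with hcase | hcase | hcase | hcase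
      · exfalso
        have hsub2 : h ⊆ whᶜ := fun p hp hpwh => (hcase hpwh) hp
        have h1 : whᶜ ∈ x := hxUF.2.2 h hhx whᶜ (hWc wh hwhW) hsub2
        have h2 : whᶜ ∈ y := hyUF.2.2 h hhy whᶜ (hWc wh hwhW) hsub2
        have h3 : wh ∉ x := (hxUF.mem_compl_iff hwhW).mp h1
        have h4 : wh ∉ y := (hyUF.mem_compl_iff hwhW).mp h2
        rcases hwhxy with ⟨h5, -⟩ | ⟨-, h5⟩
        exacts [h3 h5, h4 h5]
      · exact hcase
      · exfalso
        have h1 : wh ∈ x := hxUF.2.2 h hhx wh hwhW hcase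
        have h2 : wh ∈ y := hyUF.2.2 h hhy wh hwhW hcase
        rcases hwhxy with ⟨-, h5⟩ | ⟨h5, -⟩
        exacts [h5 h2, h5 h1]
      · exfalso
        have h1 : wh ∈ v := hvUF.2.2 hᶜ hhcv wh hwhW hcase
        have hsepiff : wh ∈ x ↔ wh ∉ y := by
          rcases hwhxy with ⟨h5, h6⟩ | ⟨h5, h6⟩
          · exact ⟨fun _ => h6, fun _ => h5⟩
          · exact ⟨fun hc => absurd hc h5, fun hc => absurd h6 hc⟩
        exact hwhu ((gate_split_agree hvUF hAUF hxA hyA hwhW hsepiff).mpr h1)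
    have hcross : Crosses wh ch := by
      by_contra hnc
      have hwhX₀ : ¬ wh ⊆ X₀ := fun hsub => hX₀z (hzUF.2.2 wh hwhz X₀ hX₀W hsub)
      have hwhZ₀ : ¬ wh ⊆ Z₀ := fun hsub => hZ₀μ (hμUF.2.2 wh hwhμ Z₀ hZ₀W hsub)
      have hX₀wh : ¬ X₀ ⊆ wh := by
        intro hsub
        have hsubh : X₀ ⊆ h := hsub.trans hwhsub
        rcases hXform with ⟨rfl, -⟩ | ⟨rfl, -⟩
        · obtain ⟨-, ⟨p, hp1, hp2⟩, -, -⟩ := hCrosschh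
          exact hp2 (hsubh hp1)
        · obtain ⟨-, -, -, ⟨p, hp1, hp2⟩⟩ := hCrosschh
          exact hp2 (hsubh hp1)
      have hZ₀wh : ¬ Z₀ ⊆ wh := by
        intro hsub
        have hsubh : Z₀ ⊆ h := hsub.trans hwhsub
        rcases hXform with ⟨-, rfl⟩ | ⟨-, rfl⟩
        · obtain ⟨-, -, -, ⟨p, hp1, hp2⟩⟩ := hCrosschh
          exact hp2 (hsubh hp1)
        · obtain ⟨-, ⟨p, hp1, hp2⟩, -, -⟩ := hCrosschh
          exact hp2 (hsubh hp1)
      rcases not_crosses_cases hnc with hcase | hcase | hcase | hcase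
      · -- wh ⊆ chᶜ
        rcases hXform with ⟨-, hZ⟩ | ⟨hX, -⟩
        · exact hwhZ₀ (hZ ▸ hcase)
        · exact hwhX₀ (hX ▸ hcase)
      · -- wh ⊆ ch
        rcases hXform with ⟨hX, -⟩ | ⟨-, hZ⟩
        · exact hwhX₀ (hX ▸ hcase)
        · exact hwhZ₀ (hZ ▸ hcase)
      · -- ch ⊆ wh
        rcases hXform with ⟨hX, -⟩ | ⟨-, hZ⟩
        · exact hX₀wh (hX ▸ hcase)
        · exact hZ₀wh (hZ ▸ hcase)
      · -- chᶜ ⊆ wh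
        rcases hXform with ⟨-, hZ⟩ | ⟨hX, -⟩
        · exact hZ₀wh (hZ ▸ hcase)
        · exact hX₀wh (hX ▸ hcase)
    rcases hwhform with rfl | rfl
    · exact hcross
    · exact crosses_compl_left.mp hcross
  -- counting
  obtain ⟨e, he, hge⟩ := hgD1
  have hGc : {w ∈ g | Crosses w h} = ⋃ i, {w ∈ e i | Crosses w h} := by
    ext w
    simp only [Set.mem_setOf_eq, Set.mem_iUnion]
    constructor
    · rintro ⟨hwg, hcr⟩
      rw [hge] at hwg
      obtain ⟨i, hi⟩ := Set.mem_iUnion.mp hwg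
      exact ⟨i, hi, hcr⟩
    · rintro ⟨i, hwi, hcr⟩
      refine ⟨?_, hcr⟩
      rw [hge]
      exact Set.mem_iUnion.mpr ⟨i, hwi⟩
  have hmemg : ∀ (i : Fin m), ∀ w ∈ e i, w ∈ g := by
    intro i w hw
    rw [hge]
    exact Set.mem_iUnion.mpr ⟨i, hw⟩
  have hGcbound : ({w ∈ g | Crosses w h}).encard ≤ ((m * L : ℕ) : ℕ∞) := by
    rw [hGc]
    refine encard_iUnion_le_card_mul _ fun i => ?_
    have hsubg : {w ∈ e i | Crosses w h} ⊆ g := fun w hw => hmemg i w hw.1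
    have hsubei : {w ∈ e i | Crosses w h} ⊆ e i := fun w hw => hw.1
    refine hdist {w ∈ e i | Crosses w h} (hsubC g hgC _ hsubg)
      ⟨i, indMono_subset_closed (he i) hsubei⟩ ?_ (fun w hw => hw.2)
    intro w hw
    rcases hsepxy w (hsubg hw) with ⟨h1, h2⟩ | ⟨h1, h2⟩
    · exact ⟨fun _ => h2, fun _ => h1⟩
    · exact ⟨fun hc => absurd hc h1, fun hn => absurd h2 hn⟩
  have hGbound : ({w ∈ g | ¬ Crosses w h}).encard ≤ (L : ℕ∞) := by
    have hGD : {w ∈ g | ¬ Crosses w h} ∈ bigD T K f :=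
      bigD_subset_closed hgC.1 fun w hw => hw.1
    exact hc₁C.2 ch hch₁ ch hch₁ _ hGD fun w hw =>
      ⟨hkey w hw.1 hw.2, hkey w hw.1 hw.2⟩
  calc g.encard = ({w ∈ g | Crosses w h} ∪ {w ∈ g | ¬ Crosses w h}).encard := by
        congr 1
        ext w
        constructor
        · intro hw
          by_cases hc : Crosses w h
          exacts [Or.inl ⟨hw, hc⟩, Or.inr ⟨hw, hc⟩]
        · rintro (⟨hw, -⟩ | ⟨hw, -⟩) <;> exact hw
    _ ≤ _ + _ := Set.encard_union_le _ _
    _ ≤ ((m * L : ℕ) : ℕ∞) + ((L : ℕ) : ℕ∞) := add_le_add hGcbound hGbound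
    _ = ((m * L + L : ℕ) : ℕ∞) := by rw [← Nat.cast_add]

lemma medUF_mem_dualSpace {x y z : Set (Set (SProd T K f))}
    (hx : x ∈ dualSpace (indWalls T K f) (bigC T K f L))
    (hy : y ∈ dualSpace (indWalls T K f) (bigC T K f L))
    (hz : z ∈ dualSpace (indWalls T K f) (bigC T K f L)) :
    medUF x y z ∈ dualSpace (indWalls T K f) (bigC T K f L) := by
  refine ⟨medUF_isUF hx.1 hy.1 hz.1, ?_⟩
  intro s
  have hsubC : ∀ c ∈ bigC T K f L, ∀ c' ⊆ c, c' ∈ bigC T K f L := bigC_subset_closed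
  have htri1 := dD_triangle hsubC (medUF x y z) (pUF (indWalls T K f) s) x
  have h2 : dD (bigC T K f L) (medUF x y z) x ≤ dD (bigC T K f L) x y := by
    apply dD_mono_seps
    intro c hs w hw
    have hiw := hs w hw
    by_cases hwx : w ∈ x
    · have hwnμ : w ∉ medUF x y z := fun hm => (hiw.mp hm) hwx
      have hwy : w ∉ y := fun hwy => hwnμ (mem_medUF.mpr (Or.inl ⟨hwx, hwy⟩))
      exact ⟨fun _ => hwy, fun _ => hwx⟩
    · have hwμ : w ∈ medUF x y z := hiw.mpr hwx
      have hwy : w ∈ y := by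
        rcases mem_medUF.mp hwμ with ⟨ha, -⟩ | ⟨ha, -⟩ | ⟨ha, -⟩
        exacts [absurd ha hwx, absurd ha hwx, ha]
      exact ⟨fun hc => absurd hc hwx, fun hny => absurd hwy hny⟩
  have h3 := dD_triangle hsubC x y (pUF (indWalls T K f) s)
  have hfin1 : dD (bigC T K f L) x (pUF (indWalls T K f) s) < ⊤ := hx.2 s
  have hfinpy : dD (bigC T K f L) (pUF (indWalls T K f) s) y < ⊤ := by
    refine lt_of_le_of_lt (dD_mono_seps fun c hs w hw => ?_) (hy.2 s)
    have h0 := hs w hw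
    exact ⟨fun hp hy' => (h0.mp hy') hp,
      fun hny => Classical.byContradiction fun hnp => hny (h0.mpr hnp)⟩
  exact lt_of_le_of_lt htri1 (WithTop.add_lt_top.mpr
    ⟨lt_of_le_of_lt (h2.trans h3) (WithTop.add_lt_top.mpr ⟨hfin1, hfinpy⟩), hfin1⟩)

end AuxBigC


/-- Corollary 5.8.  Fix `x,y,z ∈ S_C`, let `μ = μ(x,y,z)` and
`r = d_C(x,μ)`.  There exist balls `B₁,…,Bₘ` in `S_C`, each of radius at most
`2L(m+1)`, such that for every wall `h ∈ H^L_{r-L-1}(x,y) ∖ H^L(x,z)` there is some `i`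
with `g_{[x,y]}(h⁻) ⊆ Bᵢ`. -/
theorem remove_balls
    {G : Type w} [Group G] {X : Type u}
    (ρ : G →* Equiv.Perm X) (dX : X → X → ℝ) (μX : X → X → X → X)
    (δ lam cc : ℝ) {m : ℕ} (T : Fin m → Type u) [∀ i, MetricSpace (T i)]
    (K : Fin m → ℝ) (μT : ∀ i, T i → T i → T i → T i)
    (f : X → ∀ i, T i) (α : G →* Equiv.Perm (∀ i, T i))
    (hδ : 0 ≤ δ)
    (hhypX : IsHyp dX δ) (hrgX : RGSpace dX δ) (hmedX : IsCoarseMedian dX μX δ)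
    (hisoX : ∀ (g : G) (x y : X), dX (ρ g x) (ρ g y) = dX x y)
    (hqt : ∀ i, IsQuasitree (fun a b : T i => dist a b) lam)
    (hhypT : ∀ i, IsHyp (fun a b : T i => dist a b) δ)
    (hK : ∀ i, 100 * δ < K i)
    (hdisc : ∀ (i : Fin m) (t : T i), ¬ IsPreconnected (closedBall t (K i))ᶜ)
    (hmedT : ∀ i, IsCoarseMedian (fun a b : T i => dist a b) (μT i) cc)
    (hqie : IsQIE dX (l1distF fun i (a b : T i) => dist a b) f lam)
    (hqm : ∀ x y z : X,
      l1distF (fun i (a b : T i) => dist a b)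
        (fun i => μT i (f x i) (f y i) (f z i)) (f (μX x y z)) ≤ cc)
    (hisoA : ∀ (g : G) (p q : ∀ i, T i),
      l1distF (fun i (a b : T i) => dist a b) (α g p) (α g q)
        = l1distF (fun i (a b : T i) => dist a b) p q)
    (hequiv : ∀ (g : G) (x : X), f (ρ g x) = α g (f x))
    (L : ℕ)
    (hgrid : ∀ (i j : Fin m) (d₁ d₂ : Set (Set (SProd T K f))),
      d₁ ∈ indMono T K f i → d₂ ∈ indMono T K f j →
      (∀ w₁ ∈ d₁, ∀ w₂ ∈ d₂, Crosses w₁ w₂) →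
      min d₁.encard d₂.encard ≤ (L : ℕ∞))
    (hL3 : 3 ≤ L)
    (x y z : Set (Set (SProd T K f)))
    (hx : x ∈ dualSpace (indWalls T K f) (bigC T K f L))
    (hy : y ∈ dualSpace (indWalls T K f) (bigC T K f L))
    (hz : z ∈ dualSpace (indWalls T K f) (bigC T K f L)) :
    ∃ p : Fin m → Set (Set (SProd T K f)),
      (∀ i, p i ∈ dualSpace (indWalls T K f) (bigC T K f L)) ∧
      ∀ h : Set (SProd T K f),
        h ∈ HLt (indWalls T K f) (bigC T K f L)
            (fun c => ∃ i', c ∈ indMono T K f i') L x y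
            (dDr (bigC T K f L) x (medUF x y z) - L - 1) →
        h ∉ distantWalls (indWalls T K f) (bigC T K f L)
            (fun c => ∃ i', c ∈ indMono T K f i') L x z →
        ∃ i : Fin m,
          ∀ u ∈ gateMap (interval (indWalls T K f) (bigC T K f L) x y) ''
              negSide (indWalls T K f) (bigC T K f L) h,
            dDr (bigC T K f L) (p i) u ≤ 2 * L * (m + 1) := by
  classical
  refine ⟨fun _ => medUF x y z, fun i => medUF_mem_dualSpace hx hy hz, ?_⟩
  intro h hHLt hnd
  obtain ⟨hdxy, hgatebd⟩ := hHLt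
  obtain ⟨hHxy, hdist⟩ := hdxy
  obtain ⟨hhW, hhx, hhy⟩ := hHxy
  by_cases hhz : h ∈ z
  · -- `h` is not distant for `x,z` because of a long monochromatic chain
    have hwit : ∃ c ∈ bigC T K f L, (∃ i', c ∈ indMono T K f i') ∧ Seps x z c ∧
        (∀ w ∈ c, Crosses w h) ∧ ¬ c.encard ≤ (L : ℕ∞) := by
      by_contra hcon
      apply hnd
      refine ⟨⟨hhW, hhx, hhz⟩, ?_⟩
      intro c hc hM hS hX
      by_contra hL'
      exact hcon ⟨c, hc, hM, hS, hX, hL'⟩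
    obtain ⟨c₁, hc₁C, hc₁M, hc₁S, hc₁X, hc₁L⟩ := hwit
    obtain ⟨i₀, -, -, -⟩ := id hhW
    refine ⟨i₀, ?_⟩
    intro u hu
    obtain ⟨v, hvNeg, rfl⟩ := hu
    have hbd := gate_close_to_med hx hy hz hvNeg.1.1 hhW hhx hhy hdist hc₁C hc₁M hc₁S
      hc₁X hc₁L hvNeg.2
    have hne : ((m * L + L : ℕ) : ℕ∞) ≠ ⊤ := ENat.coe_ne_top _
    have hne2 : dD (bigC T K f L) (medUF x y z)
        (gateMap (interval (indWalls T K f) (bigC T K f L) x y) v) ≠ ⊤ :=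
      ne_top_of_le_ne_top hne hbd
    rw [← ENat.coe_toNat hne2] at hbd
    have hnat : (dD (bigC T K f L) (medUF x y z)
        (gateMap (interval (indWalls T K f) (bigC T K f L) x y) v)).toNat ≤ m * L + L := by
      exact_mod_cast hbd
    show ((dD (bigC T K f L) (medUF x y z)
        (gateMap (interval (indWalls T K f) (bigC T K f L) x y) v)).toNat : ℝ)
      ≤ 2 * L * (m + 1)
    calc ((dD (bigC T K f L) (medUF x y z)
          (gateMap (interval (indWalls T K f) (bigC T K f L) x y) v)).toNat : ℝ)
        ≤ ((m * L + L : ℕ) : ℝ) := by exact_mod_cast hnat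
      _ ≤ 2 * L * (m + 1) := by
          push_cast
          nlinarith [Nat.cast_nonneg (α := ℝ) L, Nat.cast_nonneg (α := ℝ) m]
  · -- impossible: the median is the gate of `z`, which lies beyond `h`
    exfalso
    have hWc : WallClosed (indWalls T K f) := indWalls_wallClosed
    have hgeq : gateMap (interval (indWalls T K f) (bigC T K f L) x y) z = medUF x y z :=
      gateMap_eq_medUF hWc hx.1 hy.1 hz.1 (fun a ha => ha.1.1)
        ⟨hx, fun k hk => hk.2.1⟩ ⟨hy, fun k hk => hk.2.2⟩ (fun a ha => ha.2)
    have hμim : medUF x y z ∈ gateMap (interval (indWalls T K f) (bigC T K f L) x y) ''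
        negSide (indWalls T K f) (bigC T K f L) h := ⟨z, ⟨hz, hhz⟩, hgeq⟩
    have hb := hgatebd _ hμim
    have hL0 : (0 : ℝ) ≤ (L : ℝ) := Nat.cast_nonneg L
    linarith


end GSC
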